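/- Let n = ℓ_1⋯ℓ_r be a square-free natural number with distinct prime factors ℓ_i, let K be a global field with gcd(char(K), n) = 1 containing a primitive nth root of unity, let α ∈ K*, and let M := K(α^{1/n}) be a cyclic extension of K of degree n with subfields L_i := K(α^{1/ℓ_i}). Then N_{M/K}(M*) = K* ∩ ∩_{i=1}^r N_{L_i/K}(L_i*); consequently, x ∈ K* is not a norm of M/K if and only if x is not a norm of L_i/K for some i. -/

import Mathlib

open scoped Classical
open IntermediateField

noncomputable section

/-- `K` is a global field: a number field, or a finite extension of a rational function
field `𝔽_q(t)` over a finite field (equivalently, `K` contains a finite subfield `F₀` and an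
element `x` transcendental over `F₀` such that `K` is finite over `F₀(x)`). -/
def IsGlobalField (K : Type*) [Field K] : Prop :=
  NumberField K ∨
    ∃ F₀ : Subfield K, Finite F₀ ∧ ∃ x : K, Transcendental F₀ x ∧
      FiniteDimensional (IntermediateField.adjoin F₀ {x}) K

/-- `A ⊆ K^ι` is a diophantine subset of `K^ι`: it is cut out by an existential
polynomial condition over `K`. -/
def IsDiophantine {K : Type*} [Field K] {ι : Type*} (A : Set (ι → K)) : Prop :=
  ∃ (m : ℕ) (f : MvPolynomial (Fin m ⊕ ι) K),
    A = {a | ∃ r : Fin m → K, MvPolynomial.eval (Sum.elim r a) f = 0}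

/-- `x` is a norm of the radical extension `F(y^{1/n})/F`, where `F(y^{1/n})` is realized
inside an algebraic closure of `F` (for `F` containing the `n`-th roots of unity this does
not depend on the choice of the root `z` of `X^n - y`). -/
def IsNormOfRadical (F : Type*) [Field F] (n : ℕ) (y x : F) : Prop :=
  ∀ z : AlgebraicClosure F, z ^ n = algebraMap F (AlgebraicClosure F) y →
    ∃ w : (IntermediateField.adjoin F {z} : IntermediateField F (AlgebraicClosure F)),
      Algebra.norm F w = x

/-!
If `x` is a norm from every `Lᵢ`, transitivity of the norm in the tower `K ⊆ Lᵢ ⊆ M` makes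
`x ^ [M : Lᵢ] = x ^ (n / ℓᵢ)` a norm from `M`, and `x ^ n = N_{M/K}(x)` is one as well.
As `n` is squarefree, `gcd(n, n/ℓ₁, …, n/ℓᵣ) = 1`, so `x` itself is a norm from `M`.
That `[Lᵢ : K] = ℓᵢ` comes from the irreducibility of `X ^ n - α`: `α` is then not an
`ℓᵢ`-th power, so `X ^ ℓᵢ - α` is irreducible.
-/

open Module Polynomial

theorem Subgroup.pow_gcd_mem {G : Type*} [Group G] {H : Subgroup G} {x : G} {a b : ℕ}
    (ha : x ^ a ∈ H) (hb : x ^ b ∈ H) : x ^ Nat.gcd a b ∈ H := by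
  rw [← zpow_natCast, Nat.gcd_eq_gcd_ab, zpow_add, zpow_mul, zpow_mul, zpow_natCast, zpow_natCast]
  exact mul_mem (zpow_mem ha _) (zpow_mem hb _)

theorem Subgroup.pow_finset_gcd_mem {G ι : Type*} [Group G] {H : Subgroup G} {x : G}
    {s : Finset ι} {f : ι → ℕ} (hf : ∀ i ∈ s, x ^ f i ∈ H) : x ^ s.gcd f ∈ H := by
  classical
  induction s using Finset.induction_on with
  | empty => simp
  | insert i s _ ih =>
    rw [Finset.gcd_insert]
    exact pow_gcd_mem (hf i (s.mem_insert_self i))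
      (ih fun j hj => hf j (Finset.mem_insert_of_mem hj))

theorem Nat.coprime_prod_gcd_prod_div {ι : Type*} [Fintype ι] {ℓ : ι → ℕ}
    (hp : ∀ i, (ℓ i).Prime) (hinj : Function.Injective ℓ) :
    Nat.Coprime (∏ i, ℓ i) (Finset.univ.gcd fun i => (∏ j, ℓ j) / ℓ i) := by
  classical
  refine Nat.coprime_of_dvd fun p hpp hpn hpgcd => ?_
  obtain ⟨k, -, hpk⟩ := hpp.prime.exists_mem_finset_dvd hpn
  rw [(Nat.prime_dvd_prime_iff_eq hpp (hp k)).1 hpk] at hpgcd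
  have hdvd : ℓ k ∣ ∏ j ∈ Finset.univ.erase k, ℓ j := by
    have := hpgcd.trans (Finset.gcd_dvd (Finset.mem_univ k))
    rwa [← Finset.prod_erase_mul _ _ (Finset.mem_univ k), Nat.mul_div_cancel _ (hp k).pos] at this
  obtain ⟨j, hj, hkj⟩ := (hp k).prime.exists_mem_finset_dvd hdvd
  exact Finset.ne_of_mem_erase hj (hinj ((Nat.prime_dvd_prime_iff_eq (hp k) (hp j)).1 hkj)).symm

section Radical
variable {K Ω : Type*} [Field K] [Field Ω] [Algebra K Ω] {n : ℕ} {α : K} {ρ : Ω}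

theorem finrank_adjoin_of_irreducible_X_pow_sub_C (hirr : Irreducible (X ^ n - C α))
    (hρ : ρ ^ n = algebraMap K Ω α) : finrank K K⟮ρ⟯ = n := by
  have hn : n ≠ 0 := by
    have := hirr.natDegree_pos
    rw [natDegree_X_pow_sub_C] at this
    exact this.ne'
  have hmonic := monic_X_pow_sub_C α hn
  have hroot : aeval ρ (X ^ n - C α) = 0 := by simp [hρ]
  rw [adjoin.finrank ⟨_, hmonic, hroot⟩, ← minpoly.eq_of_irreducible_of_monic hirr hroot hmonic,
    natDegree_X_pow_sub_C]

theorem irreducible_X_pow_sub_C_of_finrank_adjoin (hn : n ≠ 0) (hρ : ρ ^ n = algebraMap K Ω α)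
    (hdeg : finrank K K⟮ρ⟯ = n) : Irreducible (X ^ n - C α) := by
  have hmonic := monic_X_pow_sub_C α hn
  have hroot : aeval ρ (X ^ n - C α) = 0 := by simp [hρ]
  have hint : IsIntegral K ρ := ⟨_, hmonic, hroot⟩
  have hmin : X ^ n - C α = minpoly K ρ :=
    eq_of_monic_of_dvd_of_natDegree_le (minpoly.monic hint) hmonic (minpoly.dvd K ρ hroot)
      (by rw [natDegree_X_pow_sub_C, ← hdeg, adjoin.finrank hint])
  rw [hmin]
  exact minpoly.irreducible hint

theorem finrank_adjoin_pow_div_of_prime (hn : n ≠ 0) (hρ : ρ ^ n = algebraMap K Ω α)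
    (hdeg : finrank K K⟮ρ⟯ = n) {ℓ : ℕ} (hℓ : ℓ.Prime) (hdvd : ℓ ∣ n) :
    finrank K K⟮ρ ^ (n / ℓ)⟯ = ℓ := by
  have hirr := irreducible_X_pow_sub_C_of_finrank_adjoin hn hρ hdeg
  refine finrank_adjoin_of_irreducible_X_pow_sub_C
    (X_pow_sub_C_irreducible_of_prime hℓ (pow_ne_of_irreducible_X_pow_sub_C hirr hdvd hℓ.ne_one)) ?_
  rw [← pow_mul, Nat.div_mul_cancel hdvd, hρ]

end Radical

def normSubgroup (K E : Type*) [Field K] [Field E] [Algebra K E] : Subgroup Kˣ :=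
  (Units.map (Algebra.norm K : E →* K)).range

section NormSubgroup
variable {K E : Type*} [Field K] [Field E] [Algebra K E]

theorem ne_zero_of_exists_norm_eq {x : K} (h : ∃ w : E, w ≠ 0 ∧ Algebra.norm K w = x) : x ≠ 0 := by
  obtain ⟨w, hw, rfl⟩ := h
  exact ((Units.mk0 w hw).map (Algebra.norm K : E →* K)).ne_zero

theorem exists_norm_eq_iff_mem_normSubgroup {x : K} (hx : x ≠ 0) :
    (∃ w : E, w ≠ 0 ∧ Algebra.norm K w = x) ↔ Units.mk0 x hx ∈ normSubgroup K E := by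
  constructor
  · rintro ⟨w, hw, rfl⟩
    exact ⟨Units.mk0 w hw, Units.ext rfl⟩
  · rintro ⟨w, hw⟩
    exact ⟨w, w.ne_zero, congrArg Units.val hw⟩

theorem pow_finrank_mem_normSubgroup (x : Kˣ) : x ^ finrank K E ∈ normSubgroup K E :=
  ⟨Units.map (algebraMap K E : K →* E) x, Units.ext (Algebra.norm_algebraMap (x : K))⟩

variable {L : Type*} [Field L] [Algebra K L] [Algebra L E] [IsScalarTower K L E]

theorem normSubgroup_le_of_isScalarTower : normSubgroup K E ≤ normSubgroup K L := by
  rintro _ ⟨w, rfl⟩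
  exact ⟨Units.map (Algebra.norm L : E →* L) w, Units.ext Algebra.norm_norm⟩

theorem pow_finrank_mem_normSubgroup_of_isScalarTower {x : Kˣ} (hx : x ∈ normSubgroup K L) :
    x ^ finrank L E ∈ normSubgroup K E := by
  obtain ⟨u, rfl⟩ := hx
  refine ⟨Units.map (algebraMap L E : L →* E) u, Units.ext ?_⟩
  simp only [Units.coe_map, MonoidHom.coe_coe, Units.val_pow_eq_pow_val]
  rw [← Algebra.norm_norm (S := L), Algebra.norm_algebraMap, map_pow]

end NormSubgroup

namespace IntermediateField
variable {K Ω : Type*} [Field K] [Field Ω] [Algebra K Ω] {L E : IntermediateField K Ω}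

theorem normSubgroup_le_of_le (h : L ≤ E) : normSubgroup K E ≤ normSubgroup K L :=
  normSubgroup_le_of_isScalarTower (K := K) (L := L) (E := extendScalars h)

theorem pow_div_finrank_mem_normSubgroup (h : L ≤ E) {x : Kˣ} (hx : x ∈ normSubgroup K L) :
    x ^ (finrank K E / finrank K L) ∈ normSubgroup K E := by
  rcases (finrank K L).eq_zero_or_pos with hL | hL
  · rw [hL, Nat.div_zero, pow_zero]
    exact one_mem _
  have htower : finrank K L * finrank L (extendScalars h) = finrank K E :=
    finrank_mul_finrank K L (extendScalars h)
  rw [← htower, Nat.mul_div_cancel_left _ hL]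
  exact pow_finrank_mem_normSubgroup_of_isScalarTower (K := K) (L := L) (E := extendScalars h) hx

end IntermediateField

theorem normSubgroup_adjoin_root_eq_iInf {K Ω ι : Type*} [Field K] [Field Ω] [Algebra K Ω]
    [Fintype ι] {ℓ : ι → ℕ} (hp : ∀ i, (ℓ i).Prime) (hinj : Function.Injective ℓ) {n : ℕ}
    (hn : n = ∏ i, ℓ i) {α : K} {ρ : Ω} (hρ : ρ ^ n = algebraMap K Ω α)
    (hdeg : finrank K K⟮ρ⟯ = n) :
    normSubgroup K K⟮ρ⟯ = ⨅ i, normSubgroup K K⟮ρ ^ (n / ℓ i)⟯ := by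
  have hn0 : n ≠ 0 := hn ▸ Finset.prod_ne_zero_iff.2 fun i _ => (hp i).ne_zero
  have hdvd (i : ι) : ℓ i ∣ n := hn ▸ Finset.dvd_prod_of_mem ℓ (Finset.mem_univ i)
  have hle (i : ι) : K⟮ρ ^ (n / ℓ i)⟯ ≤ K⟮ρ⟯ :=
    adjoin_simple_le_iff.2 (pow_mem (mem_adjoin_simple_self K ρ) _)
  refine le_antisymm (le_iInf fun i => normSubgroup_le_of_le (hle i)) fun x hx => ?_
  have hpow : ∀ i ∈ Finset.univ, x ^ (n / ℓ i) ∈ normSubgroup K K⟮ρ⟯ := fun i _ => by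
    have := pow_div_finrank_mem_normSubgroup (hle i) (Subgroup.mem_iInf.1 hx i)
    rwa [hdeg, finrank_adjoin_pow_div_of_prime hn0 hρ hdeg (hp i) (hdvd i)] at this
  have hgcd := Subgroup.pow_gcd_mem (hdeg ▸ pow_finrank_mem_normSubgroup x)
    (Subgroup.pow_finset_gcd_mem hpow)
  rwa [hn, Nat.coprime_prod_gcd_prod_div hp hinj, pow_one] at hgcd

theorem normGroup_of_compositum_general (K : Type*) [Field K]
    (r : ℕ) (ℓ : Fin r → ℕ) (hp : ∀ i, (ℓ i).Prime) (hinj : Function.Injective ℓ)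
    (n : ℕ) (hn : n = ∏ i, ℓ i)
    (α : K)
    (ρ : AlgebraicClosure K) (hρ : ρ ^ n = algebraMap K (AlgebraicClosure K) α)
    (hdeg : Module.finrank K K⟮ρ⟯ = n) :
    ({x : K | ∃ w : K⟮ρ⟯, w ≠ 0 ∧ Algebra.norm K w = x} =
      {x : K | x ≠ 0} ∩
        ⋂ i : Fin r, {x : K | ∃ w : K⟮ρ ^ (n / ℓ i)⟯, w ≠ 0 ∧ Algebra.norm K w = x}) ∧
    ∀ x : K, x ≠ 0 →
      ((¬ ∃ w : K⟮ρ⟯, w ≠ 0 ∧ Algebra.norm K w = x) ↔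
        ∃ i : Fin r, ¬ ∃ w : K⟮ρ ^ (n / ℓ i)⟯, w ≠ 0 ∧ Algebra.norm K w = x) := by
  have hnorm (x : K) (hx : x ≠ 0) : (∃ w : K⟮ρ⟯, w ≠ 0 ∧ Algebra.norm K w = x) ↔
      ∀ i, ∃ w : K⟮ρ ^ (n / ℓ i)⟯, w ≠ 0 ∧ Algebra.norm K w = x := by
    simp only [exists_norm_eq_iff_mem_normSubgroup hx,
      normSubgroup_adjoin_root_eq_iInf hp hinj hn hρ hdeg, Subgroup.mem_iInf]
  refine ⟨Set.ext fun x => ?_, fun x hx => by rw [hnorm x hx, not_forall]⟩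
  simp only [Set.mem_ofPred_eq, Set.mem_inter_iff, Set.mem_iInter]
  refine ⟨fun h => ?_, fun ⟨hx, h⟩ => (hnorm x hx).2 h⟩
  have hx := ne_zero_of_exists_norm_eq h
  exact ⟨hx, (hnorm x hx).1 h⟩

/-- Let `n = ℓ₁ ⋯ ℓᵣ` be square-free with distinct prime factors `ℓᵢ`,
`K` a global field with `gcd(char K, n) = 1` containing a primitive `n`-th root of unity,
`α ∈ K^*`, and `M := K(α^{1/n})` a cyclic extension of degree `n`, with subfields
`Lᵢ := K(α^{1/ℓᵢ})`. Then `N_{M/K}(M^*) = K^* ∩ ⋂ᵢ N_{Lᵢ/K}(Lᵢ^*)`; consequently,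
`x ∈ K^*` is not a norm of `M/K` iff it is not a norm of some `Lᵢ/K`. We realize `M` as
`K⟮ρ⟯` for a root `ρ` of `X^n - α` in an algebraic closure, and `Lᵢ = K⟮ρ^{n/ℓᵢ}⟯`. -/
theorem normGroup_of_compositum (K : Type*) [Field K] (hK : IsGlobalField K)
    (r : ℕ) (ℓ : Fin r → ℕ) (hp : ∀ i, (ℓ i).Prime) (hinj : Function.Injective ℓ)
    (n : ℕ) (hn : n = ∏ i, ℓ i) (hchar : (n : K) ≠ 0)
    (μ : K) (hμ : IsPrimitiveRoot μ n)
    (α : K) (hα : α ≠ 0)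
    (ρ : AlgebraicClosure K) (hρ : ρ ^ n = algebraMap K (AlgebraicClosure K) α)
    (hgal : IsGalois K K⟮ρ⟯) (hcyc : IsCyclic (K⟮ρ⟯ ≃ₐ[K] K⟮ρ⟯))
    (hdeg : Module.finrank K K⟮ρ⟯ = n) :
    ({x : K | ∃ w : K⟮ρ⟯, w ≠ 0 ∧ Algebra.norm K w = x} =
      {x : K | x ≠ 0} ∩
        ⋂ i : Fin r, {x : K | ∃ w : K⟮ρ ^ (n / ℓ i)⟯, w ≠ 0 ∧ Algebra.norm K w = x}) ∧
    ∀ x : K, x ≠ 0 →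
      ((¬ ∃ w : K⟮ρ⟯, w ≠ 0 ∧ Algebra.norm K w = x) ↔
        ∃ i : Fin r, ¬ ∃ w : K⟮ρ ^ (n / ℓ i)⟯, w ≠ 0 ∧ Algebra.norm K w = x) :=
  normGroup_of_compositum_general K r ℓ hp hinj n hn α ρ hρ hdeg
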